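/- arXiv:1507.03853 — 2 statements merged into one kernel-verified Lean document; each statement's English description precedes it below -/
import Mathlib

section
/- Let R = K[x,y] be a polynomial ring in two variables over an infinite field K of arbitrary characteristic, and let I be a homogeneous ideal with R/I Artinian. Then R/I has the weak Lefschetz property. -/
open MvPolynomial

noncomputable def comp (K : Type*) [Field K] {n : ℕ} (I : Ideal (MvPolynomial (Fin n) K)) (j : ℤ) :
    Submodule K (MvPolynomial (Fin n) K ⧸ I) :=
  if 0 ≤ j then
    (MvPolynomial.homogeneousSubmodule (Fin n) K j.toNat).map
      (Ideal.Quotient.mkₐ K I).toLinearMap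
  else ⊥

noncomputable def hilb (K : Type*) [Field K] {n : ℕ} (I : Ideal (MvPolynomial (Fin n) K)) (j : ℤ) : ℕ :=
  Module.finrank K (comp K I j)

def WLP (K : Type*) [Field K] {n : ℕ} (I : Ideal (MvPolynomial (Fin n) K)) : Prop :=
  ∃ ℓ : MvPolynomial (Fin n) K, ℓ.IsHomogeneous 1 ∧ ∀ j : ℤ,
    (∀ x ∈ comp K I j, Ideal.Quotient.mk I ℓ * x = 0 → x = 0) ∨
    (comp K I (j + 1) ≤ (comp K I j).map (LinearMap.mulLeft K (Ideal.Quotient.mk I ℓ)))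


/-! Let `α` be the least degree of a nonzero form `g ∈ I`, choose `w ∈ K²` with `w 1 * g(w) ≠ 0`
(possible as `K` is infinite) and let `ℓ` be the linear form vanishing at `w`. Below degree `α` the
ideal contains no nonzero form, so multiplication by `ℓ` is injective there. From degree `α` on,
every form `f` of degree `d + 1` is `ℓ q` modulo `I`: subtracting from `f` a multiple of
`u ^ (d + 1 - α) * g`, where `u` is a linear form with `u(w) = 1`, leaves a binary form vanishing
at `w`, and such a form is divisible by `ℓ`. If `I` contains no nonzero form at all, every nonzero
linear form is injective in all degrees. -/

namespace MvPolynomial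

lemma IsHomogeneous.eval_smul {R σ : Type*} [CommSemiring R] [Fintype σ] {p : MvPolynomial σ R}
    {n : ℕ} (hp : p.IsHomogeneous n) (c : R) (w : σ → R) :
    eval (c • w) p = c ^ n * eval w p := by
  rw [eval_eq', eval_eq', Finset.mul_sum]
  refine Finset.sum_congr rfl fun d hd => ?_
  have hdeg : ∑ i, d i = n := by
    rw [← Finsupp.degree_eq_sum]
    exact (hp.degree_eq_sum_deg_support hd).symm
  simp only [Pi.smul_apply, smul_eq_mul, mul_pow, Finset.prod_mul_distrib,
    Finset.prod_pow_eq_pow_sum, hdeg]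
  ring

attribute [local instance] gradedAlgebra in
lemma homogeneousComponent_add_mul {R σ : Type*} [CommSemiring R] {ℓ : MvPolynomial σ R} {m : ℕ}
    (hℓ : ℓ.IsHomogeneous m) (q : MvPolynomial σ R) (n : ℕ) :
    homogeneousComponent (m + n) (ℓ * q) = ℓ * homogeneousComponent n q := by
  have := DirectSum.coe_decompose_mul_of_left_mem_of_le (𝒜 := homogeneousSubmodule σ R)
    (b := q) (n := m + n) hℓ (Nat.le_add_right m n)
  rw [Nat.add_sub_cancel_left] at this
  simpa only [DirectSum.decompose, Equiv.coe_fn_mk, decomposition.decompose'_apply] using this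

lemma exists_isHomogeneous_eq_mul {R σ : Type*} [CommSemiring R] {ℓ r : MvPolynomial σ R}
    {n : ℕ} (hℓ : ℓ.IsHomogeneous 1) (hr : r.IsHomogeneous (n + 1)) (hdvd : ℓ ∣ r) :
    ∃ q : MvPolynomial σ R, q.IsHomogeneous n ∧ r = ℓ * q := by
  obtain ⟨q, rfl⟩ := hdvd
  refine ⟨homogeneousComponent n q, homogeneousComponent_isHomogeneous n q, ?_⟩
  rw [← homogeneousComponent_add_mul hℓ, add_comm, homogeneousComponent_of_mem hr, if_pos rfl]

lemma exists_eval_ne_zero {R σ : Type*} [CommRing R] [IsDomain R] [Infinite R]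
    {p : MvPolynomial σ R} (hp : p ≠ 0) : ∃ w, eval w p ≠ 0 := by
  contrapose! hp
  exact MvPolynomial.funext fun w => by simp [hp w]

end MvPolynomial

section BinaryForms

variable {K : Type*} [Field K]

noncomputable def linearFormVanishingAt (w : Fin 2 → K) : MvPolynomial (Fin 2) K :=
  C (w 1) * X 0 - C (w 0) * X 1

lemma isHomogeneous_linearFormVanishingAt (w : Fin 2 → K) :
    (linearFormVanishingAt w).IsHomogeneous 1 :=
  (isHomogeneous_C_mul_X _ 0).sub (isHomogeneous_C_mul_X _ 1)

lemma linearFormVanishingAt_ne_zero {w : Fin 2 → K} (hw : w 1 ≠ 0) :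
    linearFormVanishingAt w ≠ 0 := by
  intro h
  exact hw (by simpa [linearFormVanishingAt] using congrArg (eval ![1, 0]) h)

lemma linearFormVanishingAt_dvd [Infinite K] {w : Fin 2 → K} (hw : w 1 ≠ 0)
    {r : MvPolynomial (Fin 2) K} {n : ℕ} (hr : r.IsHomogeneous n) (h0 : eval w r = 0) :
    linearFormVanishingAt w ∣ r := by
  -- As a polynomial in `X 0` over `K[X 1]`, `r` has the root `(w 0 / w 1) • X 1`, by homogeneity.
  set a : MvPolynomial (Fin 1) K := C (w 0 / w 1) * X 0
  have hroot : (finSuccEquiv K 1 r).IsRoot a := by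
    refine MvPolynomial.funext fun s => ?_
    have hpt : (Fin.cases (eval s a) s : Fin 2 → K) = (s 0 / w 1) • w := by
      ext i
      fin_cases i
      · simp only [map_mul, eval_C, eval_X, Fin.zero_eta, Fin.cases_zero, Pi.smul_apply,
          smul_eq_mul, a]
        ring
      · exact (div_mul_cancel₀ (s 0) hw).symm
    rw [eval_polynomial_eval_finSuccEquiv, hpt, hr.eval_smul, h0, mul_zero, map_zero]
  have hℓ : finSuccEquiv K 1 (linearFormVanishingAt w)
      = Polynomial.C (C (w 1)) * (Polynomial.X - Polynomial.C a) := by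
    have hC (c : K) : finSuccEquiv K 1 (C c) = Polynomial.C (C c) := by
      simp [finSuccEquiv_apply]
    have hX1 : finSuccEquiv K 1 (X 1) = Polynomial.C (X 0) :=
      finSuccEquiv_X_succ (j := 0)
    have hw0 : (C (w 0) : MvPolynomial (Fin 1) K) = C (w 1) * C (w 0 / w 1) := by
      rw [← C_mul, mul_div_cancel₀ _ hw]
    simp only [linearFormVanishingAt, map_sub, map_mul, hC, finSuccEquiv_X_zero, hX1, hw0, a]
    ring
  have hunit : IsUnit (Polynomial.C (C (w 1)) : Polynomial (MvPolynomial (Fin 1) K)) :=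
    (isUnit_iff_ne_zero.mpr hw).map (Polynomial.C.comp C)
  rw [← map_dvd_iff (finSuccEquiv K 1), hℓ, hunit.mul_left_dvd]
  exact Polynomial.dvd_iff_isRoot.mpr hroot

end BinaryForms

section GradedPieces

variable {K : Type*} [Field K] {n : ℕ} (I : Ideal (MvPolynomial (Fin n) K))

lemma comp_natCast (d : ℕ) :
    comp K I d = (homogeneousSubmodule (Fin n) K d).map (Ideal.Quotient.mkₐ K I).toLinearMap := by
  rw [comp, if_pos (Int.natCast_nonneg d), Int.toNat_natCast]

lemma comp_of_neg {j : ℤ} (hj : j < 0) : comp K I j = ⊥ := by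
  rw [comp, if_neg (not_le.mpr hj)]

lemma mulLeft_injOn_comp {ℓ : MvPolynomial (Fin n) K} (hℓ : ℓ.IsHomogeneous 1) (hℓ0 : ℓ ≠ 0)
    {d : ℕ} (hI : ∀ f ∈ I, f.IsHomogeneous (d + 1) → f = 0) :
    ∀ x ∈ comp K I d, Ideal.Quotient.mk I ℓ * x = 0 → x = 0 := by
  intro x hx hℓx
  rw [comp_natCast] at hx
  obtain ⟨f, hf, rfl⟩ := hx
  have hℓf : ℓ * f ∈ I := Ideal.Quotient.eq_zero_iff_mem.mp (by rwa [map_mul])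
  have hℓf0 := hI _ hℓf (by simpa only [add_comm] using hℓ.mul hf)
  rw [(mul_eq_zero.mp hℓf0).resolve_left hℓ0, map_zero]

lemma comp_succ_le_map_mulLeft {ℓ : MvPolynomial (Fin n) K} {d : ℕ}
    (h : ∀ f : MvPolynomial (Fin n) K, f.IsHomogeneous (d + 1) →
      ∃ q, q.IsHomogeneous d ∧ f - ℓ * q ∈ I) :
    comp K I (d + 1) ≤ (comp K I d).map (LinearMap.mulLeft K (Ideal.Quotient.mk I ℓ)) := by
  intro x hx
  rw [← Nat.cast_succ, comp_natCast] at hx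
  obtain ⟨f, hf, rfl⟩ := hx
  obtain ⟨q, hq, hfq⟩ := h f hf
  refine ⟨Ideal.Quotient.mkₐ K I q, by rw [comp_natCast]; exact ⟨q, hq, rfl⟩, ?_⟩
  rw [LinearMap.mulLeft_apply, Ideal.Quotient.mkₐ_eq_mk, AlgHom.toLinearMap_apply,
    Ideal.Quotient.mkₐ_eq_mk, ← map_mul]
  exact (Ideal.Quotient.eq.mpr hfq).symm

lemma wlp_of_forall_nat {ℓ : MvPolynomial (Fin n) K} (hℓ : ℓ.IsHomogeneous 1)
    (h : ∀ d : ℕ, (∀ x ∈ comp K I d, Ideal.Quotient.mk I ℓ * x = 0 → x = 0) ∨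
      comp K I (d + 1) ≤ (comp K I d).map (LinearMap.mulLeft K (Ideal.Quotient.mk I ℓ))) :
    WLP K I := by
  refine ⟨ℓ, hℓ, fun j => ?_⟩
  rcases lt_or_ge j 0 with hj | hj
  · left
    simp [comp_of_neg I hj]
  · lift j to ℕ using hj
    exact h j

end GradedPieces

lemma exists_sub_linearFormVanishingAt_mul_mem {K : Type*} [Field K] [Infinite K]
    {I : Ideal (MvPolynomial (Fin 2) K)} {g : MvPolynomial (Fin 2) K} {α : ℕ} (hgI : g ∈ I)
    (hg : g.IsHomogeneous α) {w : Fin 2 → K} (hw : w 1 ≠ 0) (hgw : eval w g ≠ 0) {d : ℕ}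
    (hαd : α ≤ d + 1) {f : MvPolynomial (Fin 2) K} (hf : f.IsHomogeneous (d + 1)) :
    ∃ q, q.IsHomogeneous d ∧ f - linearFormVanishingAt w * q ∈ I := by
  set u : MvPolynomial (Fin 2) K := C (w 1)⁻¹ * X 1
  set p := u ^ (d + 1 - α) * g
  have hp : p.IsHomogeneous (d + 1) := by
    simpa only [one_mul, Nat.sub_add_cancel hαd] using
      ((isHomogeneous_C_mul_X _ 1).pow (d + 1 - α)).mul hg
  have hpw : eval w p = eval w g := by simp [p, u, inv_mul_cancel₀ hw]
  set r := C (eval w g) * f - C (eval w f) * p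
  have hr : r.IsHomogeneous (d + 1) := (hf.C_mul _).sub (hp.C_mul _)
  have hrw : eval w r = 0 := by simp only [r, map_sub, map_mul, eval_C, hpw]; ring
  obtain ⟨q, hq, hrq⟩ := exists_isHomogeneous_eq_mul (isHomogeneous_linearFormVanishingAt w) hr
    (linearFormVanishingAt_dvd hw hr hrw)
  refine ⟨C (eval w g)⁻¹ * q, hq.C_mul _, ?_⟩
  have hgw' : C (eval w g) * C (eval w g)⁻¹ = (1 : MvPolynomial (Fin 2) K) := by
    rw [← C_mul, mul_inv_cancel₀ hgw, C_1]
  have hfq : f - linearFormVanishingAt w * (C (eval w g)⁻¹ * q)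
      = C (eval w g)⁻¹ * C (eval w f) * u ^ (d + 1 - α) * g := by
    linear_combination C (eval w g)⁻¹ * hrq - f * hgw'
  rw [hfq]
  exact I.mul_mem_left _ hgI

theorem stmt6_general {K : Type*} [Field K] [Infinite K] (I : Ideal (MvPolynomial (Fin 2) K)) :
    WLP K I := by
  classical
  by_cases hex : ∃ α, ∃ g ∈ I, g ≠ 0 ∧ g.IsHomogeneous α
  · obtain ⟨g, hgI, hg0, hg⟩ := Nat.find_spec hex
    obtain ⟨w, hw⟩ := exists_eval_ne_zero (mul_ne_zero (X_ne_zero 1) hg0)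
    rw [map_mul, eval_X] at hw
    refine wlp_of_forall_nat I (isHomogeneous_linearFormVanishingAt w) fun d => ?_
    by_cases hd : d + 1 < Nat.find hex
    · exact Or.inl <| mulLeft_injOn_comp I (isHomogeneous_linearFormVanishingAt w)
        (linearFormVanishingAt_ne_zero (left_ne_zero_of_mul hw))
        fun f hf hfd => by_contra fun hf0 => Nat.find_min hex hd ⟨f, hf, hf0, hfd⟩
    · exact Or.inr <| comp_succ_le_map_mulLeft I fun f hf =>
        exists_sub_linearFormVanishingAt_mul_mem hgI hg (left_ne_zero_of_mul hw)
          (right_ne_zero_of_mul hw) (not_lt.mp hd) hf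
  · exact wlp_of_forall_nat I (isHomogeneous_X K 0) fun d => Or.inl <|
      mulLeft_injOn_comp I (isHomogeneous_X K 0) (X_ne_zero 0)
        fun f hf hfd => by_contra fun hf0 => hex ⟨_, f, hf, hf0, hfd⟩

/-- **Proposition (2-wlp).** Over an infinite field `K` of arbitrary characteristic, every
Artinian graded quotient `K[x,y]/I` has the weak Lefschetz property. -/
theorem stmt6 {K : Type*} [Field K] [Infinite K] (I : Ideal (MvPolynomial (Fin 2) K))
    (hhom : ∀ p ∈ I, ∀ j : ℕ, MvPolynomial.homogeneousComponent j p ∈ I)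
    (hArt : Module.Finite K (MvPolynomial (Fin 2) K ⧸ I)) :
    WLP K I :=
  stmt6_general I
end

section
/- Let M be an n×n matrix with entries M_{i,j} = C(p, q+j-i) for nonnegative integers p ≥ q. Then det M = Mac(n, p-q, q), where Mac(a,b,c) = H(a)H(b)H(c)H(a+b+c)/(H(a+b)H(a+c)H(b+c)) and H is the hyperfactorial. -/
/-!
Multiplying `M` on the right by the unitriangular Pascal matrix `(C(j, k))_{k,j}` does not change
the determinant, and by Vandermonde's convolution the product has entries `C(p + j, p - q + i)`.
Taking out the factor `1 / (p - q + i)!` of row `i` and `(p + j)! / (q + j)!` of column `j`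
leaves the matrix of falling factorials `(q + j)^{\underline i}`, monic polynomials of degree `i`
evaluated at `q + j`; its determinant is the Vandermonde determinant of `q, …, q + n - 1`,
namely `H(n)`. The row and column factors assemble to `Mac(n, p - q, q) / H(n)`.
-/

/-- The hyperfactorial `H(n) = ∏_{i=0}^{n-1} i!`. -/
def hyperfac (n : ℕ) : ℕ := ∏ i ∈ Finset.range n, Nat.factorial i

/-- MacMahon's box formula `Mac(a,b,c) = H(a)H(b)H(c)H(a+b+c)/(H(a+b)H(a+c)H(b+c))`. -/
def MacQ (a b c : ℕ) : ℚ :=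
  (hyperfac a * hyperfac b * hyperfac c * hyperfac (a + b + c) : ℚ) /
    (hyperfac (a + b) * hyperfac (a + c) * hyperfac (b + c))

/-- Binomial coefficient `C(p,k)` for an integer `k`, taken to be `0` when `k < 0` (or `k > p`). -/
def chooseZ (p : ℕ) (k : ℤ) : ℕ := if 0 ≤ k then p.choose k.toNat else 0

open Finset Matrix Polynomial Nat

lemma chooseZ_natCast (p k : ℕ) : chooseZ p k = p.choose k := by simp [chooseZ]

lemma chooseZ_of_neg (p : ℕ) {k : ℤ} (hk : k < 0) : chooseZ p k = 0 := by
  simp [chooseZ, not_le.2 hk]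

lemma chooseZ_succ_add_one (p : ℕ) (k : ℤ) :
    chooseZ (p + 1) (k + 1) = chooseZ p k + chooseZ p (k + 1) := by
  rcases k with k | _ | k
  · exact_mod_cast Nat.choose_succ_succ' p k
  · simp [chooseZ]
  · have hk : Int.negSucc (k + 1) + 1 < 0 := by omega
    simp only [chooseZ_of_neg _ hk, chooseZ_of_neg _ (Int.negSucc_lt_zero _)]

lemma chooseZ_sub_symm (m : ℕ) (k : ℤ) : chooseZ m (m - k) = chooseZ m k := by
  rcases lt_or_ge k 0 with hk | hk
  · rw [chooseZ_of_neg m hk, chooseZ, if_pos (by omega)]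
    exact Nat.choose_eq_zero_of_lt (by omega)
  obtain ⟨k, rfl⟩ := Int.eq_ofNat_of_zero_le hk
  rcases le_or_gt k m with hkm | hkm
  · rw [← Nat.cast_sub hkm, chooseZ_natCast, chooseZ_natCast, Nat.choose_symm hkm]
  · rw [chooseZ_of_neg m (by omega), chooseZ_natCast, Nat.choose_eq_zero_of_lt hkm]

lemma sum_range_choose_mul_chooseZ (p j : ℕ) (k : ℤ) :
    ∑ i ∈ range (j + 1), j.choose i * chooseZ p (k + i) = chooseZ (p + j) (k + j) := by
  induction j generalizing k with
  | zero => simp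
  | succ j ih =>
    calc ∑ i ∈ range (j + 2), (j + 1).choose i * chooseZ p (k + i)
        = ∑ i ∈ range (j + 1), j.choose i * chooseZ p (k + 1 + i) +
            (∑ i ∈ range (j + 1), j.choose (i + 1) * chooseZ p (k + (i + 1 : ℕ)) +
              j.choose 0 * chooseZ p (k + (0 : ℕ))) := by
          rw [sum_range_succ']
          simp only [Nat.choose_succ_succ', add_mul, sum_add_distrib, Nat.choose_zero_right]
          push_cast
          simp only [add_assoc, add_comm (1 : ℤ)]
      _ = ∑ i ∈ range (j + 1), j.choose i * chooseZ p (k + 1 + i) +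
            ∑ i ∈ range (j + 2), j.choose i * chooseZ p (k + i) := by
          rw [sum_range_succ' _ (j + 1)]
      _ = chooseZ (p + j) (k + j) + chooseZ (p + j) (k + j + 1) := by
          rw [sum_range_succ _ (j + 1), Nat.choose_succ_self, zero_mul, add_zero, ih, ih, add_comm,
            add_right_comm k 1]
      _ = chooseZ (p + (j + 1)) (k + (j + 1 : ℕ)) := by
          rw [← chooseZ_succ_add_one]
          push_cast
          ring_nf

lemma sum_chooseZ_mul_choose (s q i j n : ℕ) (hj : j < n) :
    ∑ k ∈ range n, chooseZ (s + q) (q + k - i) * j.choose k = (s + q + j).choose (s + i) := by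
  have htail : ∀ k ∈ range n, k ∉ range (j + 1) →
      chooseZ (s + q) (q + k - i) * j.choose k = 0 :=
    fun k _ hk => by rw [Nat.choose_eq_zero_of_lt (by simpa using hk), mul_zero]
  rw [← sum_subset (range_subset_range.2 hj) htail]
  simp_rw [mul_comm (chooseZ _ _), add_sub_right_comm (q : ℤ)]
  rw [sum_range_choose_mul_chooseZ, ← chooseZ_natCast, ← chooseZ_sub_symm]
  congr 1
  push_cast
  ring

lemma of_chooseZ_mul_of_choose {R : Type*} [NonAssocSemiring R] (n s q : ℕ) :
    of (fun i j : Fin n => (chooseZ (s + q) (q + j - i) : R)) *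
        of (fun i j : Fin n => ((j : ℕ).choose i : R)) =
      of fun i j : Fin n => ((s + q + j).choose (s + i) : R) := by
  ext i j
  rw [mul_apply, of_apply, ← sum_chooseZ_mul_choose s q i j n j.isLt, Nat.cast_sum,
    ← Fin.sum_univ_eq_sum_range]
  simp only [of_apply, Nat.cast_mul]

section

variable {R : Type*} [CommRing R]

lemma det_of_choose (n : ℕ) : det (of fun i j : Fin n => ((j : ℕ).choose i : R)) = 1 := by
  rw [det_of_isUpperTriangular fun i j hji =>
    by simp [Nat.choose_eq_zero_of_lt (show (j : ℕ) < i from hji)]]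
  simp

lemma det_vandermonde_natCast (n : ℕ) :
    det (vandermonde fun i : Fin n => (i : R)) = hyperfac n := by
  cases n with
  | zero => simp [hyperfac]
  | succ n => rw [det_vandermonde_id_eq_superFactorial, hyperfac, prod_range_succ_factorial]

lemma det_eval_descPochhammer_add [IsDomain R] (n : ℕ) (x : R) :
    det (of fun i j : Fin n => (descPochhammer R i).eval (j + x)) = hyperfac n := by
  have h := det_eval_matrixOfPolynomials_eq_det_vandermonde (fun i : Fin n => (i : R) + x)
    (fun j => descPochhammer R j) (fun j => descPochhammer_natDegree R j)
    (fun j => monic_descPochhammer R j)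
  rw [det_vandermonde_add, det_vandermonde_natCast] at h
  rw [← det_transpose]
  exact h.symm

end

lemma hyperfac_add (m k : ℕ) : hyperfac (m + k) = hyperfac m * ∏ j ∈ range k, (m + j)! :=
  prod_range_add _ m k

lemma MacQ_eq_prod (n s q : ℕ) :
    MacQ n s q = hyperfac n * ∏ j ∈ range n, ((s + q + j)! / ((s + j)! * (q + j)!) : ℚ) := by
  have hpos : ∀ m, (hyperfac m : ℚ) ≠ 0 := fun m => by
    simp [hyperfac, prod_ne_zero_iff, Nat.factorial_ne_zero]
  rw [MacQ, add_comm n s, add_comm n q, add_right_comm, hyperfac_add (s + q) n, hyperfac_add s n,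
    hyperfac_add q n, prod_div_distrib, prod_mul_distrib]
  push_cast
  field_simp [hpos s, hpos q, hpos (s + q)]

lemma choose_mul_factorial_mul_factorial_add (s q i j : ℕ) :
    (s + q + j).choose (s + i) * (s + i)! * (q + j)! = (s + q + j)! * (q + j).descFactorial i := by
  have hsplit := Nat.descFactorial_mul_descFactorial (n := s + q + j) (le_add_right s i)
  have hfac := Nat.factorial_mul_descFactorial (show s ≤ s + q + j by omega)
  simp only [show s + q + j - s = q + j by omega, Nat.add_sub_cancel_left] at hsplit hfac
  rw [mul_comm _ (s + i)!, ← descFactorial_eq_factorial_mul_choose, ← hsplit, ← hfac]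
  ring

lemma det_choose_add_eq_MacQ (n s q : ℕ) :
    det (of fun i j : Fin n => ((s + q + j).choose (s + i) : ℚ)) = MacQ n s q := by
  have hcol := det_mul_column (fun i : Fin n => ((s + i)! : ℚ)⁻¹)
    (of fun i j => ((s + q + j)! / (q + j)! : ℚ) * (descPochhammer ℚ i).eval ((j : ℚ) + q))
  have hrow := det_mul_row (fun j : Fin n => ((s + q + j)! / (q + j)! : ℚ))
    (of fun i j => (descPochhammer ℚ i).eval ((j : ℚ) + q))
  simp only [of_apply] at hcol hrow
  have hentry : (of fun i j : Fin n => ((s + q + j).choose (s + i) : ℚ)) =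
      of fun i j : Fin n => ((s + i)! : ℚ)⁻¹ *
        (((s + q + j)! / (q + j)! : ℚ) * (descPochhammer ℚ i).eval ((j : ℚ) + q)) := by
    ext i j
    rw [of_apply, of_apply, show ((j : ℕ) : ℚ) + q = ((q + j : ℕ) : ℚ) by push_cast; ring,
      descPochhammer_eval_eq_descFactorial]
    field_simp
    exact_mod_cast choose_mul_factorial_mul_factorial_add s q i j
  rw [hentry, hcol, hrow, det_eval_descPochhammer_add, MacQ_eq_prod,
    Fin.prod_univ_eq_prod_range (fun i => ((s + i)! : ℚ)⁻¹),
    Fin.prod_univ_eq_prod_range (fun j => ((s + q + j)! / (q + j)! : ℚ))]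
  simp only [div_eq_mul_inv, mul_inv, prod_mul_distrib, prod_inv_distrib]
  ring

/-- **Binomial determinant (the `r = 0` case).** The `n×n` matrix with entries
`M_{i,j} = C(p, q+j-i)` (with `p ≥ q`) has determinant `Mac(n, p-q, q)`. -/
theorem stmt12 (n p q : ℕ) (hpq : q ≤ p) :
    Matrix.det (Matrix.of fun i j : Fin n => (chooseZ p ((q : ℤ) + (j : ℕ) - (i : ℕ)) : ℚ)) =
      MacQ n (p - q) q := by
  obtain ⟨s, rfl⟩ := Nat.exists_eq_add_of_le' hpq
  rw [Nat.add_sub_cancel, ← det_choose_add_eq_MacQ, ← of_chooseZ_mul_of_choose, det_mul,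
    det_of_choose, mul_one]
end
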